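/- The entropy distance d_H(x₁,x₂) = Σ_{k=1}^∞ γ_k |M_k(x₁) − M_k(x₂)| is a metric on the set of symmetric probability measures on ℝ̄. In particular, d_H(x₁,x₂) = 0 implies x₁ = x₂. -/

import Mathlib

open MeasureTheory Real Set Filter
open scoped ENNReal NNReal

noncomputable section

/-- Exponential on the extended reals, valued in `ℝ≥0∞` (with `e^{-∞}=0`, `e^{∞}=∞`). -/
def eexp (a : EReal) : ℝ≥0∞ :=
  if a = ⊤ then ⊤ else if a = ⊥ then 0 else ENNReal.ofReal (Real.exp a.toReal)

/-- A finite Borel measure `x` on the extended reals is *symmetric* if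
`x(-E) = ∫_E e^{-α} x(dα)` for every Borel set `E`. -/
def SymmetricM (x : Measure EReal) : Prop :=
  ∀ E : Set EReal, MeasurableSet E →
    x ((fun a : EReal => -a) ⁻¹' E) = ∫⁻ a in E, eexp (-a) ∂x

/-- `tanh(α/2)` extended continuously to the extended reals. -/
def etanh (a : EReal) : ℝ :=
  if a = ⊤ then 1 else if a = ⊥ then -1 else Real.tanh (a.toReal / 2)

/-- The moment functional `M_k(x) = ∫ tanh^{2k}(α/2) x(dα)`. -/
def Mk (k : ℕ) (x : Measure EReal) : ℝ := ∫ a, (etanh a) ^ (2 * k) ∂x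

/-- The entropy integrand `log₂(1+e^{-α})`, with the convention that it vanishes at `±∞`
(symmetric measures put no mass at `-∞`). -/
def entFn (a : EReal) : ℝ :=
  if a = ⊤ then 0 else if a = ⊥ then 0 else Real.logb 2 (1 + Real.exp (-a.toReal))

/-- The entropy functional `H(x) = ∫ log₂(1+e^{-α}) x(dα)`. -/
def Hent (x : Measure EReal) : ℝ := ∫ a, entFn a ∂x

/-- Variable-node convolution `⊛`: pushforward of the product measure under addition. -/
def vconv (x y : Measure EReal) : Measure EReal :=
  Measure.map (fun p : EReal × EReal => p.1 + p.2) (x.prod y)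

/-- Inverse hyperbolic tangent on `ℝ`. -/
def artanh (t : ℝ) : ℝ := Real.log ((1 + t) / (1 - t)) / 2

/-- The check-node combination map `(α₁,α₂) ↦ 2 tanh⁻¹(tanh(α₁/2) tanh(α₂/2))` on `ℝ̄ × ℝ̄`. -/
def boxFn (p : EReal × EReal) : EReal :=
  if etanh p.1 * etanh p.2 = 1 then ⊤
  else if etanh p.1 * etanh p.2 = -1 then ⊥
  else ((2 * _root_.artanh (etanh p.1 * etanh p.2) : ℝ) : EReal)

/-- Check-node convolution `⊞`: pushforward of the product measure under `boxFn`. -/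
def cconv (x y : Measure EReal) : Measure EReal :=
  Measure.map boxFn (x.prod y)

/-- Degradation order: `Degraded x' x` means `x' ⪰ x`, i.e.
`∫ f(|tanh(α/2)|) dx' ≥ ∫ f(|tanh(α/2)|) dx` for all concave non-increasing `f : [0,1] → ℝ`. -/
def Degraded (x' x : Measure EReal) : Prop :=
  ∀ f : ℝ → ℝ, ConcaveOn ℝ (Set.Icc (0:ℝ) 1) f → AntitoneOn f (Set.Icc (0:ℝ) 1) →
    ∫ a, f |etanh a| ∂x ≤ ∫ a, f |etanh a| ∂x'

/-- The coefficients `γ_k = 1/((log 2)·2k·(2k−1))`. -/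
def gam (k : ℕ) : ℝ := 1 / (Real.log 2 * (2 * (k : ℝ)) * (2 * (k : ℝ) - 1))

/-- The entropy distance `d_H(x₁,x₂) = Σ_{k≥1} γ_k |M_k(x₁) − M_k(x₂)|`. -/
def dH (x y : Measure EReal) : ℝ := ∑' k : ℕ, gam (k + 1) * |Mk (k + 1) x - Mk (k + 1) y|

/-- The Bhattacharyya integrand `e^{-α/2}` (vanishing at `±∞`, as symmetric measures put
no mass at `-∞`). -/
def bFn (a : EReal) : ℝ :=
  if a = ⊤ then 0 else if a = ⊥ then 0 else Real.exp (-(a.toReal) / 2)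

/-- The Bhattacharyya functional `B(x) = ∫ e^{-α/2} x(dα)`. -/
def Bhat (x : Measure EReal) : ℝ := ∫ a, bFn a ∂x

/-- `n`-fold variable-node convolution power `x^{⊛n}` (with `x^{⊛0} = Δ_0`). -/
def vpow (x : Measure EReal) : ℕ → Measure EReal
  | 0 => Measure.dirac 0
  | n + 1 => vconv (vpow x n) x





lemma tanh_lt_one' (x : ℝ) : Real.tanh x < 1 := by
  rw [Real.tanh_eq_sinh_div_cosh, div_lt_one (Real.cosh_pos x)]
  nlinarith [Real.cosh_sub_sinh x, Real.exp_pos (-x)]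

lemma neg_one_lt_tanh (x : ℝ) : -1 < Real.tanh x := by
  rw [Real.tanh_eq_sinh_div_cosh, lt_div_iff₀ (Real.cosh_pos x)]
  nlinarith [Real.cosh_add_sinh x, Real.exp_pos x]

lemma tanh_nonneg' {x : ℝ} (h : 0 ≤ x) : 0 ≤ Real.tanh x := by
  rw [Real.tanh_eq_sinh_div_cosh]
  refine div_nonneg ?_ (Real.cosh_pos x).le
  have := Real.sinh_le_sinh.2 h
  simpa using this

lemma continuous_tanh' : Continuous Real.tanh := by
  have : Real.tanh = fun x => Real.sinh x / Real.cosh x := by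
    funext x; exact Real.tanh_eq_sinh_div_cosh x
  rw [this]
  exact Real.continuous_sinh.div Real.continuous_cosh fun x => (Real.cosh_pos x).ne'

lemma one_add_tanh (x : ℝ) : 1 + Real.tanh x = Real.exp x / Real.cosh x := by
  rw [Real.tanh_eq_sinh_div_cosh, ← Real.cosh_add_sinh]
  field_simp

lemma one_sub_tanh (x : ℝ) : 1 - Real.tanh x = Real.exp (-x) / Real.cosh x := by
  rw [Real.tanh_eq_sinh_div_cosh, ← Real.cosh_sub_sinh]
  field_simp

lemma artanh_tanh (x : ℝ) : _root_.artanh (Real.tanh x) = x := by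
  unfold _root_.artanh
  have : (1 + Real.tanh x) / (1 - Real.tanh x) = Real.exp (2 * x) := by
    rw [one_add_tanh, one_sub_tanh, div_div_div_cancel_right₀ (Real.cosh_pos x).ne',
      ← Real.exp_sub]
    ring_nf
  rw [this, Real.log_exp]; ring

lemma abs_etanh_le_one (a : EReal) : |etanh a| ≤ 1 := by
  unfold etanh
  split_ifs with h1 h2
  · simp
  · simp
  · rw [abs_le]
    exact ⟨(_root_.neg_one_lt_tanh _).le, (tanh_lt_one' _).le⟩

lemma measurable_etanh : Measurable etanh := by
  unfold etanh
  refine Measurable.ite (MeasurableSet.singleton _) measurable_const ?_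
  refine Measurable.ite (MeasurableSet.singleton _) measurable_const ?_
  exact continuous_tanh'.measurable.comp (measurable_ereal_toReal.div_const 2)

lemma etanh_neg (a : EReal) : etanh (-a) = - etanh a := by
  rcases eq_or_ne a ⊤ with rfl | ht
  · simp [etanh]
  rcases eq_or_ne a ⊥ with rfl | hb
  · simp [etanh]
  have h1 : -a ≠ ⊤ := by simp [EReal.neg_eq_top_iff, hb]
  have h2 : -a ≠ ⊥ := by simp [EReal.neg_eq_bot_iff, ht]
  simp only [etanh, if_neg h1, if_neg h2, if_neg ht, if_neg hb, EReal.toReal_neg]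
  rw [EReal.toReal_neg_eq, neg_div, Real.tanh_neg]

lemma etanh_eq_zero_iff (a : EReal) : etanh a = 0 ↔ a = 0 := by
  rcases eq_or_ne a ⊤ with rfl | ht
  · simp [etanh]
  rcases eq_or_ne a ⊥ with rfl | hb
  · simp [etanh]
  simp only [etanh, if_neg ht, if_neg hb]
  rw [Real.tanh_eq_sinh_div_cosh, div_eq_zero_iff]
  constructor
  · rintro (h | h)
    · have h0 : a.toReal = 0 := by
        have := Real.sinh_eq_zero.mp h; linarith
      rw [← EReal.coe_toReal ht hb, h0, EReal.coe_zero]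
    · exact absurd h (Real.cosh_pos _).ne'
  · rintro rfl; simp [Real.sinh_eq_zero]



lemma measurable_eexp : Measurable eexp := by
  unfold eexp
  refine Measurable.ite (MeasurableSet.singleton _) measurable_const ?_
  refine Measurable.ite (MeasurableSet.singleton _) measurable_const ?_
  exact ENNReal.measurable_ofReal.comp (Real.measurable_exp.comp measurable_ereal_toReal)

/-- inverse map from [0,1] (t = tanh²(α/2)) back to [0,∞] ⊆ EReal -/
def psi (t : ℝ) : EReal :=
  if 1 ≤ t then ⊤ else ((2 * _root_.artanh (Real.sqrt t) : ℝ) : EReal)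

lemma measurable_psi : Measurable psi := by
  unfold psi
  refine Measurable.ite (measurableSet_le measurable_const measurable_id) measurable_const ?_
  refine Measurable.coe_real_ereal ?_
  refine Measurable.const_mul ?_ 2
  unfold _root_.artanh
  exact ((Real.measurable_log.comp
    ((measurable_const.add Real.continuous_sqrt.measurable).div
      (measurable_const.sub Real.continuous_sqrt.measurable)))).div_const 2

lemma etanh_top : etanh ⊤ = 1 := by simp [etanh]
lemma etanh_bot : etanh ⊥ = -1 := by simp [etanh]
lemma etanh_coe (r : ℝ) : etanh (r : EReal) = Real.tanh (r / 2) := by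
  simp [etanh]

lemma etanh_sq_lt_one (r : ℝ) : (etanh (r : EReal))^2 < 1 := by
  rw [etanh_coe]
  have h1 := tanh_lt_one' (r/2)
  have h2 := _root_.neg_one_lt_tanh (r/2)
  nlinarith

lemma psi_etanh_sq {a : EReal} (ha : a ∈ Set.Ici (0 : EReal)) : psi ((etanh a)^2) = a := by
  rcases eq_or_ne a ⊤ with rfl | ht
  · simp [etanh_top, psi]
  have hb : a ≠ ⊥ := ne_of_gt (lt_of_lt_of_le (by simp) ha)
  lift a to ℝ using ⟨ht, hb⟩ with r
  rw [Set.mem_Ici] at ha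
  have hr : (0:ℝ) ≤ r := EReal.coe_nonneg.mp ha
  have hlt := etanh_sq_lt_one r
  rw [psi, if_neg (not_le.mpr hlt), etanh_coe]
  have hnn : 0 ≤ Real.tanh (r/2) := tanh_nonneg' (by linarith)
  rw [Real.sqrt_sq hnn, _root_.artanh_tanh]
  norm_cast
  push_cast
  ring

lemma eexp_neg_eq {a : EReal} (ha : a ∈ Set.Ici (0 : EReal)) :
    eexp (-a) = ENNReal.ofReal ((1 - Real.sqrt ((etanh a)^2)) / (1 + Real.sqrt ((etanh a)^2))) := by
  rcases eq_or_ne a ⊤ with rfl | ht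
  · simp [etanh_top, eexp]
  have hb : a ≠ ⊥ := ne_of_gt (lt_of_lt_of_le (by simp) ha)
  lift a to ℝ using ⟨ht, hb⟩ with r
  rw [Set.mem_Ici] at ha
  have hr : (0:ℝ) ≤ r := EReal.coe_nonneg.mp ha
  have hnn : 0 ≤ Real.tanh (r/2) := tanh_nonneg' (by linarith)
  rw [etanh_coe, Real.sqrt_sq hnn]
  rw [show -(r : EReal) = ((-r : ℝ) : EReal) by simp, eexp]
  rw [if_neg (by exact_mod_cast EReal.coe_ne_top _), if_neg (by exact_mod_cast EReal.coe_ne_bot _)]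
  rw [EReal.toReal_coe]
  congr 1
  rw [one_sub_tanh, one_add_tanh, div_div_div_cancel_right₀ (Real.cosh_pos _).ne', ← Real.exp_sub]
  ring_nf



lemma integrable_etanh_pow (n : ℕ) (x : Measure EReal) [IsProbabilityMeasure x] :
    Integrable (fun a => (etanh a) ^ n) x := by
  refine Integrable.mono' (integrable_const 1) ((measurable_etanh.pow_const n).aestronglyMeasurable) ?_
  refine Filter.Eventually.of_forall fun a => ?_
  rw [norm_pow, Real.norm_eq_abs]
  exact pow_le_one₀ (abs_nonneg _) (abs_etanh_le_one a)

lemma Mk_nonneg (k : ℕ) (x : Measure EReal) : 0 ≤ Mk k x := by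
  refine integral_nonneg fun a => ?_
  rw [mul_comm, pow_mul]
  positivity

lemma Mk_le_one (k : ℕ) (x : Measure EReal) [IsProbabilityMeasure x] : Mk k x ≤ 1 := by
  have : Mk k x ≤ ∫ _, (1:ℝ) ∂x := by
    refine integral_mono (integrable_etanh_pow _ x) (integrable_const 1) fun a => ?_
    calc (etanh a)^(2*k) ≤ |(etanh a)^(2*k)| := le_abs_self _
    _ ≤ 1 := by rw [abs_pow]; exact pow_le_one₀ (abs_nonneg _) (abs_etanh_le_one a)
  simpa using this

lemma gam_pos (k : ℕ) : 0 < gam (k + 1) := by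
  unfold gam
  have h2 : (0:ℝ) < Real.log 2 := Real.log_pos (by norm_num)
  have h1 : (0:ℝ) < 2 * ((k:ℝ)+1) - 1 := by
    have : (0:ℝ) ≤ (k:ℝ) := Nat.cast_nonneg k
    linarith
  have h3 : (0:ℝ) < 2 * (((k:ℕ)+1 : ℕ):ℝ) := by positivity
  push_cast at h3 ⊢
  apply div_pos one_pos
  apply mul_pos (mul_pos h2 h3) h1

lemma gam_le (k : ℕ) : gam (k + 1) ≤ 1 / Real.log 2 * (1 / ((k:ℝ)+1)^2) := by
  unfold gam
  have h2 : (0:ℝ) < Real.log 2 := Real.log_pos (by norm_num)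
  rw [div_mul_div_comm, one_mul]
  refine one_div_le_one_div_of_le (by positivity) ?_
  push_cast
  have hk : (0:ℝ) ≤ (k:ℝ) := Nat.cast_nonneg k
  nlinarith [sq_nonneg ((k:ℝ)+1), hk, h2, mul_nonneg hk hk]

lemma summable_aux : Summable (fun k : ℕ => 1 / Real.log 2 * (1 / ((k:ℝ)+1)^2) * 2) := by
  apply Summable.mul_right
  apply Summable.mul_left
  have : Summable (fun n : ℕ => 1 / (n:ℝ)^2) := by
    rw [summable_one_div_nat_pow]
    norm_num
  have := (summable_nat_add_iff 1).mpr this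
  simpa using this

lemma dH_term_nonneg (x y : Measure EReal) (k : ℕ) :
    0 ≤ gam (k + 1) * |Mk (k + 1) x - Mk (k + 1) y| :=
  mul_nonneg (gam_pos k).le (abs_nonneg _)

lemma dH_term_le (x y : Measure EReal) [IsProbabilityMeasure x] [IsProbabilityMeasure y] (k : ℕ) :
    gam (k + 1) * |Mk (k + 1) x - Mk (k + 1) y| ≤ 1 / Real.log 2 * (1 / ((k:ℝ)+1)^2) * 2 := by
  refine mul_le_mul (gam_le k) ?_ (abs_nonneg _) (by positivity)
  rw [abs_sub_le_iff]
  constructor <;>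
    nlinarith [Mk_nonneg (k+1) x, Mk_le_one (k+1) x, Mk_nonneg (k+1) y, Mk_le_one (k+1) y]

lemma summable_dH (x y : Measure EReal) [IsProbabilityMeasure x] [IsProbabilityMeasure y] :
    Summable (fun k : ℕ => gam (k + 1) * |Mk (k + 1) x - Mk (k + 1) y|) :=
  Summable.of_nonneg_of_le (dH_term_nonneg x y) (dH_term_le x y) summable_aux


section MomentProblem
variable {ν : Measure ℝ} [IsProbabilityMeasure ν]

lemma ae_mem_Icc (h : ν (Set.Icc (0:ℝ) 1)ᶜ = 0) : ∀ᵐ t ∂ν, t ∈ Set.Icc (0:ℝ) 1 := by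
  rw [MeasureTheory.ae_iff]
  exact h

lemma integrable_of_cont (h : ν (Set.Icc (0:ℝ) 1)ᶜ = 0) {g : ℝ → ℝ} (hg : Continuous g) :
    Integrable g ν := by
  obtain ⟨C, hC⟩ := (isCompact_Icc (a := (0:ℝ)) (b := 1)).exists_bound_of_continuousOn
    hg.continuousOn
  refine Integrable.mono' (integrable_const C) hg.aestronglyMeasurable ?_
  filter_upwards [ae_mem_Icc h] with t ht
  exact hC t ht

lemma integral_poly_eq {ν1 ν2 : Measure ℝ} [IsProbabilityMeasure ν1] [IsProbabilityMeasure ν2]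
    (h1 : ν1 (Set.Icc (0:ℝ) 1)ᶜ = 0) (h2 : ν2 (Set.Icc (0:ℝ) 1)ᶜ = 0)
    (hm : ∀ n : ℕ, ∫ t, t^n ∂ν1 = ∫ t, t^n ∂ν2) (p : Polynomial ℝ) :
    ∫ t, p.eval t ∂ν1 = ∫ t, p.eval t ∂ν2 := by
  have hint : ∀ (ν : Measure ℝ) (_ : IsProbabilityMeasure ν) (_ : ν (Set.Icc (0:ℝ) 1)ᶜ = 0)
      (i : ℕ), Integrable (fun t => p.coeff i * t ^ i) ν := by
    intro ν hp hν i
    exact integrable_of_cont hν (continuous_const.mul (continuous_pow i))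
  simp_rw [Polynomial.eval_eq_sum_range]
  rw [integral_finset_sum _ (fun i _ => hint ν1 inferInstance h1 i),
    integral_finset_sum _ (fun i _ => hint ν2 inferInstance h2 i)]
  refine Finset.sum_congr rfl fun i _ => ?_
  rw [integral_const_mul, integral_const_mul, hm i]

lemma integral_cont_eq {ν1 ν2 : Measure ℝ} [IsProbabilityMeasure ν1] [IsProbabilityMeasure ν2]
    (h1 : ν1 (Set.Icc (0:ℝ) 1)ᶜ = 0) (h2 : ν2 (Set.Icc (0:ℝ) 1)ᶜ = 0)
    (hm : ∀ n : ℕ, ∫ t, t^n ∂ν1 = ∫ t, t^n ∂ν2) {g : ℝ → ℝ} (hg : Continuous g) :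
    ∫ t, g t ∂ν1 = ∫ t, g t ∂ν2 := by
  have key : ∀ ε : ℝ, 0 < ε → |∫ t, g t ∂ν1 - ∫ t, g t ∂ν2| ≤ 2 * ε := by
    intro ε hε
    obtain ⟨p, hp⟩ := exists_polynomial_near_of_continuousOn 0 1 g hg.continuousOn ε hε
    have hb : ∀ (ν : Measure ℝ) (_ : IsProbabilityMeasure ν) (_ : ν (Set.Icc (0:ℝ) 1)ᶜ = 0),
        |∫ t, g t ∂ν - ∫ t, p.eval t ∂ν| ≤ ε := by
      intro ν hpm hν
      rw [← integral_sub (integrable_of_cont hν hg)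
        (integrable_of_cont hν p.continuous)]
      have := norm_integral_le_of_norm_le_const (μ := ν) (f := fun t => g t - p.eval t) (C := ε) ?_
      · simpa using this
      · filter_upwards [ae_mem_Icc hν] with t ht
        rw [Real.norm_eq_abs, abs_sub_comm]
        exact (hp t ht).le
    have hpe := integral_poly_eq h1 h2 hm p
    calc |∫ t, g t ∂ν1 - ∫ t, g t ∂ν2|
        = |(∫ t, g t ∂ν1 - ∫ t, p.eval t ∂ν1) - (∫ t, g t ∂ν2 - ∫ t, p.eval t ∂ν2)| := by
          rw [hpe]; ring_nf
      _ ≤ |∫ t, g t ∂ν1 - ∫ t, p.eval t ∂ν1| + |∫ t, g t ∂ν2 - ∫ t, p.eval t ∂ν2| :=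
          abs_sub _ _
      _ ≤ ε + ε := add_le_add (hb ν1 inferInstance h1) (hb ν2 inferInstance h2)
      _ = 2 * ε := by ring
  have : |∫ t, g t ∂ν1 - ∫ t, g t ∂ν2| ≤ 0 := by
    by_contra hcon
    push_neg at hcon
    have := key (|∫ t, g t ∂ν1 - ∫ t, g t ∂ν2| / 4) (by linarith)
    linarith
  have := abs_nonneg (∫ t, g t ∂ν1 - ∫ t, g t ∂ν2)
  have h0 : |∫ t, g t ∂ν1 - ∫ t, g t ∂ν2| = 0 := le_antisymm ‹_› ‹_›
  have := abs_eq_zero.mp h0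
  linarith [sub_eq_zero.mp this]

lemma meas_eq_of_moments {ν1 ν2 : Measure ℝ} [IsProbabilityMeasure ν1] [IsProbabilityMeasure ν2]
    (h1 : ν1 (Set.Icc (0:ℝ) 1)ᶜ = 0) (h2 : ν2 (Set.Icc (0:ℝ) 1)ᶜ = 0)
    (hm : ∀ n : ℕ, ∫ t, t^n ∂ν1 = ∫ t, t^n ∂ν2) : ν1 = ν2 := by
  apply ext_of_forall_lintegral_eq_of_IsFiniteMeasure
  intro f
  have hc : Continuous fun t => (f t : ℝ) := NNReal.continuous_coe.comp f.continuous
  rw [lintegral_coe_eq_integral _ (integrable_of_cont h1 hc),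
    lintegral_coe_eq_integral _ (integrable_of_cont h2 hc),
    integral_cont_eq h1 h2 hm hc]

end MomentProblem


section Reconstruct


def qf : EReal → ℝ := fun a => (etanh a)^2

lemma measurable_qf : Measurable qf := measurable_etanh.pow_const 2

lemma qf_neg (a : EReal) : qf (-a) = qf a := by simp [qf, etanh_neg]

lemma qf_mem (a : EReal) : qf a ∈ Set.Icc (0:ℝ) 1 := by
  have h := abs_etanh_le_one a
  have h2 := abs_nonneg (etanh a)
  have h3 := sq_abs (etanh a)
  constructor
  · exact sq_nonneg (etanh a)
  · show (etanh a)^2 ≤ 1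
    nlinarith

lemma qf_zero : qf 0 = 0 := by
  simp [qf, etanh, EReal.toReal_zero]

lemma qf_eq_zero_iff (a : EReal) : qf a = 0 ↔ a = 0 := by
  rw [qf, pow_eq_zero_iff (two_ne_zero), etanh_eq_zero_iff]

lemma eexp_zero : eexp 0 = 1 := by
  rw [eexp, if_neg (by simp), if_neg (by simp), EReal.toReal_zero, Real.exp_zero,
    ENNReal.ofReal_one]

def hfun : ℝ → ℝ≥0∞ := fun t => ENNReal.ofReal ((1 - Real.sqrt t) / (1 + Real.sqrt t))

lemma measurable_hfun : Measurable hfun :=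
  ENNReal.measurable_ofReal.comp
    (((measurable_const.sub Real.continuous_sqrt.measurable)).div
      (measurable_const.add Real.continuous_sqrt.measurable))

lemma hfun_ne_top (t : ℝ) : hfun t ≠ ⊤ := ENNReal.ofReal_ne_top

variable (x : Measure EReal) [IsProbabilityMeasure x]

lemma md_eq (B : Set ℝ) (hB : MeasurableSet B) :
    ((Measure.map qf (x.restrict (Set.Ici (0:EReal)))).withDensity hfun) B
      = ∫⁻ a in qf ⁻¹' B ∩ Set.Ici (0:EReal), eexp (-a) ∂x := by
  rw [withDensity_apply _ hB, setLIntegral_map hB measurable_hfun measurable_qf,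
    Measure.restrict_restrict (measurable_qf hB)]
  refine setLIntegral_congr_fun ((measurable_qf hB).inter measurableSet_Ici)
    (fun a ha => ?_)
  exact (eexp_neg_eq ha.2).symm

lemma m_eq (B : Set ℝ) (hB : MeasurableSet B) :
    (Measure.map qf (x.restrict (Set.Ici (0:EReal)))) B
      = x (qf ⁻¹' B ∩ Set.Ici (0:EReal)) := by
  rw [Measure.map_apply measurable_qf hB, Measure.restrict_apply (measurable_qf hB)]

open Classical in
lemma lint_split (B : Set ℝ) (hB : MeasurableSet B) :
    ∫⁻ a in qf ⁻¹' B ∩ Set.Ici (0:EReal), eexp (-a) ∂x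
      = (if (0:ℝ) ∈ B then x {(0:EReal)} else 0)
        + ∫⁻ a in qf ⁻¹' B ∩ Set.Ioi (0:EReal), eexp (-a) ∂x := by
  have hsplit : qf ⁻¹' B ∩ Set.Ici (0:EReal)
      = (qf ⁻¹' B ∩ {(0:EReal)}) ∪ (qf ⁻¹' B ∩ Set.Ioi (0:EReal)) := by
    rw [← Set.inter_union_distrib_left]
    congr 1
    rw [← Set.Ioi_insert]
    rw [Set.insert_eq]
  rw [hsplit, lintegral_union ((measurable_qf hB).inter measurableSet_Ioi) ?_]
  · congr 1
    by_cases h0 : (0:ℝ) ∈ B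
    · have : qf ⁻¹' B ∩ {(0:EReal)} = {(0:EReal)} := by
        refine Set.inter_eq_right.mpr ?_
        intro a ha
        rw [Set.mem_singleton_iff] at ha; subst ha
        simpa [qf_zero] using h0
      rw [this, if_pos h0]
      have : ∫⁻ a in {(0:EReal)}, eexp (-a) ∂x = ∫⁻ _ in {(0:EReal)}, 1 ∂x := by
        refine setLIntegral_congr_fun (measurableSet_singleton _)
          (fun a ha => ?_)
        rw [Set.mem_singleton_iff] at ha; subst ha
        rw [neg_zero, eexp_zero]
      rw [this, setLIntegral_one]
    · have : qf ⁻¹' B ∩ {(0:EReal)} = ∅ := by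
        refine Set.eq_empty_iff_forall_notMem.mpr fun a ha => ?_
        rw [Set.mem_inter_iff, Set.mem_singleton_iff] at ha
        rcases ha with ⟨haB, rfl⟩
        exact h0 (by simpa [qf_zero] using haB)
      rw [this, if_neg h0]
      simp
  · refine Set.disjoint_left.mpr fun a ha ha' => ?_
    rcases ha with ⟨-, ha⟩
    rw [Set.mem_singleton_iff] at ha; subst ha
    exact lt_irrefl _ (Set.mem_Ioi.mp ha'.2)

lemma neg_preimage_eq (B : Set ℝ) :
    (fun a : EReal => -a) ⁻¹' (qf ⁻¹' B ∩ Set.Ioi (0:EReal)) = qf ⁻¹' B ∩ Set.Iio (0:EReal) := by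
  ext a
  simp only [Set.mem_preimage, Set.mem_inter_iff, Set.mem_Ioi, Set.mem_Iio]
  rw [qf_neg]
  constructor
  · rintro ⟨h1, h2⟩
    refine ⟨h1, ?_⟩
    rwa [← neg_zero, EReal.neg_lt_neg_iff] at h2
  · rintro ⟨h1, h2⟩
    refine ⟨h1, ?_⟩
    rwa [← neg_zero, EReal.neg_lt_neg_iff]

lemma sym_neg_part (sx : SymmetricM x) (B : Set ℝ) (hB : MeasurableSet B) :
    ∫⁻ a in qf ⁻¹' B ∩ Set.Ioi (0:EReal), eexp (-a) ∂x = x (qf ⁻¹' B ∩ Set.Iio (0:EReal)) := by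
  rw [← sx _ ((measurable_qf hB).inter measurableSet_Ioi), neg_preimage_eq]

lemma total_split (B : Set ℝ) (hB : MeasurableSet B) :
    Measure.map qf x B = x (qf ⁻¹' B ∩ Set.Ici (0:EReal)) + x (qf ⁻¹' B ∩ Set.Iio (0:EReal)) := by
  rw [Measure.map_apply measurable_qf hB,
    ← measure_inter_add_diff (qf ⁻¹' B) (measurableSet_Ici (a := (0:EReal)))]
  congr 1
  rw [Set.diff_eq, Set.compl_Ici]

lemma nu_zero_eq : Measure.map qf x {(0:ℝ)} = x {(0:EReal)} := by
  rw [Measure.map_apply measurable_qf (measurableSet_singleton _)]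
  congr 1
  ext a
  simp only [Set.mem_preimage, Set.mem_singleton_iff]
  exact qf_eq_zero_iff a

open Classical in
lemma key_decomp (sx : SymmetricM x) (B : Set ℝ) (hB : MeasurableSet B) :
    (Measure.map qf (x.restrict (Set.Ici (0:EReal)))) B
      + ((Measure.map qf (x.restrict (Set.Ici (0:EReal)))).withDensity hfun) B
      = Measure.map qf x B + (if (0:ℝ) ∈ B then Measure.map qf x {(0:ℝ)} else 0) := by
  rw [m_eq x B hB, md_eq x B hB, lint_split x B hB, sym_neg_part x sx B hB,
    total_split x B hB, nu_zero_eq x]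
  ring

end Reconstruct


section Final

lemma withDensity_gfun (m : Measure ℝ) :
    m.withDensity (fun t => 1 + hfun t) = m + m.withDensity hfun := by
  rw [show (fun t => 1 + hfun t) = (1 : ℝ → ℝ≥0∞) + hfun from rfl,
    withDensity_add_left measurable_one, withDensity_one]

lemma withDensity_cancel {m1 m2 : Measure ℝ}
    (h : m1.withDensity (fun t => 1 + hfun t) = m2.withDensity (fun t => 1 + hfun t)) :
    m1 = m2 := by
  have hg : Measurable (fun t => 1 + hfun t) := measurable_const.add measurable_hfun
  have key : ∀ m : Measure ℝ, (m.withDensity (fun t => 1 + hfun t)).withDensity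
      (fun t => (1 + hfun t)⁻¹) = m := by
    intro m
    rw [← withDensity_mul m hg (g := fun t => (1 + hfun t)⁻¹) hg.inv]
    have : (fun t => 1 + hfun t) * (fun t => (1 + hfun t)⁻¹) = 1 := by
      funext t
      have h0 : (1 + hfun t) ≠ 0 := by
        intro hc
        have : (1:ℝ≥0∞) ≤ 1 + hfun t := le_self_add
        rw [hc] at this
        exact (not_le.mpr zero_lt_one) this
      have ht : (1 + hfun t) ≠ ⊤ := ENNReal.add_ne_top.mpr ⟨ENNReal.one_ne_top, hfun_ne_top t⟩
      exact ENNReal.mul_inv_cancel h0 ht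
    rw [this, withDensity_one]
  rw [← key m1, h, key m2]

lemma restrict_eq_of (x1 x2 : Measure EReal) [IsProbabilityMeasure x1] [IsProbabilityMeasure x2]
    (s1 : SymmetricM x1) (s2 : SymmetricM x2)
    (hν : Measure.map qf x1 = Measure.map qf x2) :
    x1.restrict (Set.Ici (0:EReal)) = x2.restrict (Set.Ici (0:EReal)) := by
  set m1 := Measure.map qf (x1.restrict (Set.Ici (0:EReal))) with hm1
  set m2 := Measure.map qf (x2.restrict (Set.Ici (0:EReal))) with hm2
  have hsum : m1 + m1.withDensity hfun = m2 + m2.withDensity hfun := by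
    ext B hB
    rw [Measure.add_apply, Measure.add_apply, hm1, hm2, key_decomp x1 s1 B hB,
      key_decomp x2 s2 B hB, hν]
  have hwd : m1.withDensity (fun t => 1 + hfun t) = m2.withDensity (fun t => 1 + hfun t) := by
    rw [withDensity_gfun, withDensity_gfun, hsum]
  have hm : m1 = m2 := withDensity_cancel hwd
  have hpsi : ∀ (x : Measure EReal),
      Measure.map psi (Measure.map qf (x.restrict (Set.Ici (0:EReal))))
        = x.restrict (Set.Ici (0:EReal)) := by
    intro x
    rw [Measure.map_map measurable_psi measurable_qf]
    have hae : (psi ∘ qf) =ᵐ[x.restrict (Set.Ici (0:EReal))] id := by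
      filter_upwards [ae_restrict_mem measurableSet_Ici] with a ha
      exact psi_etanh_sq ha
    rw [Measure.map_congr hae, Measure.map_id]
  rw [← hpsi x1, ← hpsi x2, ← hm1, ← hm2, hm]

lemma eq_of_Mk_eq (x1 x2 : Measure EReal) [IsProbabilityMeasure x1] [IsProbabilityMeasure x2]
    (s1 : SymmetricM x1) (s2 : SymmetricM x2) (hM : ∀ k, 1 ≤ k → Mk k x1 = Mk k x2) :
    x1 = x2 := by
  have hmap : ∀ (x : Measure EReal) (n : ℕ),
      ∫ t, t ^ n ∂(Measure.map qf x) = Mk n x := by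
    intro x n
    rw [integral_map measurable_qf.aemeasurable ((continuous_pow n).measurable).aestronglyMeasurable]
    unfold Mk qf
    congr 1
    funext a
    rw [← pow_mul]
  have hsupp : ∀ (x : Measure EReal), Measure.map qf x (Set.Icc (0:ℝ) 1)ᶜ = 0 := by
    intro x
    rw [Measure.map_apply measurable_qf measurableSet_Icc.compl]
    have : qf ⁻¹' (Set.Icc (0:ℝ) 1)ᶜ = ∅ := by
      ext a
      simp only [Set.mem_preimage, Set.mem_compl_iff, Set.mem_empty_iff_false, iff_false,
        not_not]
      exact qf_mem a
    rw [this, measure_empty]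
  have inst1 : IsProbabilityMeasure (Measure.map qf x1) :=
    Measure.isProbabilityMeasure_map measurable_qf.aemeasurable
  have inst2 : IsProbabilityMeasure (Measure.map qf x2) :=
    Measure.isProbabilityMeasure_map measurable_qf.aemeasurable
  have hmom : ∀ n : ℕ, ∫ t, t^n ∂(Measure.map qf x1) = ∫ t, t^n ∂(Measure.map qf x2) := by
    intro n
    rcases Nat.eq_zero_or_pos n with rfl | hn
    · simp
    · rw [hmap x1 n, hmap x2 n]
      exact hM n hn
  have hν : Measure.map qf x1 = Measure.map qf x2 :=
    meas_eq_of_moments (hsupp x1) (hsupp x2) hmom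
  have hres := restrict_eq_of x1 x2 s1 s2 hν
  ext E hE
  have hpos : x1 (E ∩ Set.Ici 0) = x2 (E ∩ Set.Ici 0) := by
    have := congrArg (fun m : Measure EReal => m E) hres
    simpa [Measure.restrict_apply hE] using this
  have hneg : x1 (E ∩ Set.Iio 0) = x2 (E ∩ Set.Iio 0) := by
    set S := (fun a : EReal => -a) ⁻¹' E ∩ Set.Ioi (0:EReal) with hS
    have hSm : MeasurableSet S := (measurable_neg hE).inter measurableSet_Ioi
    have hpre : (fun a : EReal => -a) ⁻¹' S = E ∩ Set.Iio 0 := by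
      ext a
      simp only [hS, Set.mem_preimage, Set.mem_inter_iff, Set.mem_Ioi, Set.mem_Iio, neg_neg]
      constructor
      · rintro ⟨h1, h2⟩
        exact ⟨h1, by rwa [← neg_zero, EReal.neg_lt_neg_iff] at h2⟩
      · rintro ⟨h1, h2⟩
        exact ⟨h1, by rwa [← neg_zero, EReal.neg_lt_neg_iff]⟩
    have hSsub : S ∩ Set.Ici (0:EReal) = S :=
      Set.inter_eq_left.mpr fun a ha => Set.mem_Ici.mpr (le_of_lt ha.2)
    have er : ∀ (x : Measure EReal),
        ∫⁻ a in S, eexp (-a) ∂(x.restrict (Set.Ici (0:EReal))) = ∫⁻ a in S, eexp (-a) ∂x := by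
      intro x
      rw [Measure.restrict_restrict hSm, hSsub]
    calc x1 (E ∩ Set.Iio 0) = ∫⁻ a in S, eexp (-a) ∂x1 := by rw [← hpre, s1 S hSm]
    _ = ∫⁻ a in S, eexp (-a) ∂(x1.restrict (Set.Ici (0:EReal))) := (er x1).symm
    _ = ∫⁻ a in S, eexp (-a) ∂(x2.restrict (Set.Ici (0:EReal))) := by rw [hres]
    _ = ∫⁻ a in S, eexp (-a) ∂x2 := er x2
    _ = x2 (E ∩ Set.Iio 0) := by rw [← hpre, s2 S hSm]
  have hdiff : E \ Set.Ici (0:EReal) = E ∩ Set.Iio 0 := by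
    rw [Set.diff_eq, Set.compl_Ici]
  calc x1 E = x1 (E ∩ Set.Ici 0) + x1 (E \ Set.Ici 0) :=
        (measure_inter_add_diff E measurableSet_Ici).symm
  _ = x2 (E ∩ Set.Ici 0) + x2 (E \ Set.Ici 0) := by rw [hdiff, hpos, hneg]
  _ = x2 E := measure_inter_add_diff E measurableSet_Ici


/-- The entropy distance `d_H` is a metric on the set of symmetric
probability measures on the extended reals; in particular `d_H(x₁,x₂) = 0` implies
`x₁ = x₂`. -/
theorem stmt11 (x1 x2 x3 : Measure EReal)
    [IsProbabilityMeasure x1] [IsProbabilityMeasure x2] [IsProbabilityMeasure x3]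
    (s1 : SymmetricM x1) (s2 : SymmetricM x2) (s3 : SymmetricM x3) :
    0 ≤ dH x1 x2 ∧ dH x1 x1 = 0 ∧ dH x1 x2 = dH x2 x1 ∧
    dH x1 x3 ≤ dH x1 x2 + dH x2 x3 ∧ (dH x1 x2 = 0 → x1 = x2) := by 
  refine ⟨tsum_nonneg (dH_term_nonneg x1 x2), ?_, ?_, ?_, ?_⟩
  · simp [dH]
  · unfold dH
    exact tsum_congr fun k => by rw [abs_sub_comm]
  · unfold dH
    have hle : ∀ k : ℕ, gam (k+1) * |Mk (k+1) x1 - Mk (k+1) x3|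
        ≤ gam (k+1) * |Mk (k+1) x1 - Mk (k+1) x2| + gam (k+1) * |Mk (k+1) x2 - Mk (k+1) x3| := by
      intro k
      rw [← mul_add]
      exact mul_le_mul_of_nonneg_left (abs_sub_le _ _ _) (gam_pos k).le
    calc (∑' k : ℕ, gam (k+1) * |Mk (k+1) x1 - Mk (k+1) x3|)
        ≤ ∑' k : ℕ, (gam (k+1) * |Mk (k+1) x1 - Mk (k+1) x2|
            + gam (k+1) * |Mk (k+1) x2 - Mk (k+1) x3|) :=
          Summable.tsum_le_tsum hle (summable_dH x1 x3) ((summable_dH x1 x2).add (summable_dH x2 x3))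
    _ = _ := Summable.tsum_add (summable_dH x1 x2) (summable_dH x2 x3)
  · intro h
    unfold dH at h
    have hterm : ∀ j : ℕ, gam (j+1) * |Mk (j+1) x1 - Mk (j+1) x2| = 0 := by
      intro j
      have hle := Summable.le_tsum (summable_dH x1 x2) j (fun i _ => dH_term_nonneg x1 x2 i)
      rw [h] at hle
      exact le_antisymm hle (dH_term_nonneg x1 x2 j)
    refine eq_of_Mk_eq x1 x2 s1 s2 fun k hk => ?_
    obtain ⟨j, rfl⟩ : ∃ j, k = j + 1 := ⟨k - 1, by omega⟩
    have := hterm j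
    rcases mul_eq_zero.mp this with hg | habs
    · exact absurd hg (gam_pos j).ne'
    · have := abs_eq_zero.mp habs
      linarith [sub_eq_zero.mp this]
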